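/- Let f be a homeomorphism of a compact metric space (X,d) and let n be a positive integer. If f is n-expansive and has the shadowing property, then the chain recurrent set of f equals the closure of the set of periodic points of f, i.e. CR(f) = closure(Per(f)). -/

import Mathlib

/-!
A chain recurrent point `x` lies on closed `δ`-chains for every `δ`; repeating such a chain gives
a periodic `δ`-pseudo-orbit, which is shadowed by a point `z` close to `x`. The iterates of `z`
along multiples of the period all stay in a small dynamical ball around `z`, which is finite by
`n`-expansivity, so two of them coincide and `z` is periodic. Conversely, periodic points are
chain recurrent and the chain recurrent set is closed.
-/

open Metric Filter Set

variable {X : Type*} [MetricSpace X]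

/-- The iterate of a homeomorphism by an integer power. -/
def hIter (f : X ≃ₜ X) (k : ℤ) (x : X) : X := (f.toEquiv ^ k) x

/-- The local stable set of `x` of size `c`:
points whose forward iterates stay `c`-close to those of `x`. -/
def localStable (f : X ≃ₜ X) (c : ℝ) (x : X) : Set X :=
  {y | ∀ k : ℕ, dist ((⇑f)^[k] y) ((⇑f)^[k] x) ≤ c}

/-- The local unstable set of `x` of size `c`:
points whose backward iterates stay `c`-close to those of `x`. -/
def localUnstable (f : X ≃ₜ X) (c : ℝ) (x : X) : Set X :=
  {y | ∀ k : ℕ, dist ((⇑f.symm)^[k] y) ((⇑f.symm)^[k] x) ≤ c}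

/-- The stable set of `x`. -/
def stableSet (f : X ≃ₜ X) (x : X) : Set X :=
  {y | Tendsto (fun k : ℕ => dist ((⇑f)^[k] y) ((⇑f)^[k] x)) atTop (nhds 0)}

/-- The unstable set of `x`. -/
def unstableSet (f : X ≃ₜ X) (x : X) : Set X :=
  {y | Tendsto (fun k : ℕ => dist ((⇑f.symm)^[k] y) ((⇑f.symm)^[k] x)) atTop (nhds 0)}

/-- `f` is positively `n`-expansive: for some `c > 0` every local stable set of
size `c` contains at most `n` points. -/
def PosNExpansive (f : X ≃ₜ X) (n : ℕ) : Prop :=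
  ∃ c > 0, ∀ x : X, ∀ S : Finset X, ↑S ⊆ localStable f c x → S.card ≤ n

/-- `f` is `n`-expansive: for some `c > 0` every dynamical ball of size `c`
contains at most `n` points. -/
def NExpansive (f : X ≃ₜ X) (n : ℕ) : Prop :=
  ∃ c > 0, ∀ x : X, ∀ S : Finset X,
    ↑S ⊆ localStable f c x ∩ localUnstable f c x → S.card ≤ n

/-- `f` is expansive. -/
def Expansive (f : X ≃ₜ X) : Prop :=
  ∃ c > 0, ∀ x y : X, (∀ k : ℤ, dist (hIter f k x) (hIter f k y) ≤ c) → x = y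

/-- `(x_k)_{k ∈ ℤ}` is a `δ`-pseudo-orbit. -/
def IsPseudoOrbit (f : X ≃ₜ X) (δ : ℝ) (x : ℤ → X) : Prop :=
  ∀ k : ℤ, dist (f (x k)) (x (k + 1)) < δ

/-- `(x_k)_{k ∈ ℤ}` is a two-sided limit pseudo-orbit:
`d(f(x_k), x_{k+1}) → 0` as `|k| → ∞`. -/
def IsTwoSidedLimitPseudoOrbit (f : X ≃ₜ X) (x : ℤ → X) : Prop :=
  Tendsto (fun k : ℤ => dist (f (x k)) (x (k + 1))) cofinite (nhds 0)

/-- `z` `ε`-shadows the sequence `(x_k)_{k ∈ ℤ}`. -/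
def Shadows (f : X ≃ₜ X) (ε : ℝ) (z : X) (x : ℤ → X) : Prop :=
  ∀ k : ℤ, dist (hIter f k z) (x k) < ε

/-- `z` two-sided limit shadows `(x_k)_{k ∈ ℤ}`. -/
def TwoSidedLimitShadows (f : X ≃ₜ X) (z : X) (x : ℤ → X) : Prop :=
  Tendsto (fun k : ℤ => dist (hIter f k z) (x k)) cofinite (nhds 0)

/-- The shadowing property. -/
def ShadowingProperty (f : X ≃ₜ X) : Prop :=
  ∀ ε > 0, ∃ δ > 0, ∀ x : ℤ → X, IsPseudoOrbit f δ x → ∃ z : X, Shadows f ε z x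

/-- The L-shadowing property. -/
def LShadowingProperty (f : X ≃ₜ X) : Prop :=
  ∀ ε > 0, ∃ δ > 0, ∀ x : ℤ → X, IsPseudoOrbit f δ x →
    IsTwoSidedLimitPseudoOrbit f x →
    ∃ z : X, Shadows f ε z x ∧ TwoSidedLimitShadows f z x

/-- Topological transitivity. -/
def TopTransitive (f : X ≃ₜ X) : Prop :=
  ∀ U V : Set X, IsOpen U → IsOpen V → U.Nonempty → V.Nonempty →
    ∃ k : ℕ, ((⇑f)^[k] '' U ∩ V).Nonempty

/-- There is a nontrivial finite `ε`-pseudo-orbit from `x` to `y`. -/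
def ChainFrom (f : X ≃ₜ X) (ε : ℝ) (x y : X) : Prop :=
  ∃ (l : ℕ) (c : ℕ → X), 0 < l ∧ c 0 = x ∧ c l = y ∧
    ∀ k < l, dist (f (c k)) (c (k + 1)) < ε

/-- `x` is a chain recurrent point of `f`. -/
def ChainRecurrent (f : X ≃ₜ X) (x : X) : Prop :=
  ∀ ε > 0, ChainFrom f ε x x

/-- The chain recurrent class of `x`. -/
def chainClass (f : X ≃ₜ X) (x : X) : Set X :=
  {y | ∀ ε > 0, ChainFrom f ε x y ∧ ChainFrom f ε y x}

/-- `x` is a periodic point of `f`. -/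
def Periodic (f : X ≃ₜ X) (x : X) : Prop :=
  ∃ k : ℕ, 1 ≤ k ∧ (⇑f)^[k] x = x

/-- `x` is a non-wandering point of `f`. -/
def NonWandering (f : X ≃ₜ X) (x : X) : Prop :=
  ∀ U : Set X, IsOpen U → x ∈ U → ∃ k : ℕ, 0 < k ∧ ((⇑f)^[k] '' U ∩ U).Nonempty

/-- The omega limit set of `x`: accumulation points of the forward orbit. -/
def omegaLimitSet (f : X ≃ₜ X) (x : X) : Set X :=
  {y | ∃ φ : ℕ → ℕ, StrictMono φ ∧ Tendsto (fun n => (⇑f)^[φ n] x) atTop (nhds y)}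

/-- `z` two-sided limit shadows `(x_k)` with gap `K`. -/
def TwoSidedLimitShadowsWithGap (f : X ≃ₜ X) (K : ℤ) (z : X) (x : ℤ → X) : Prop :=
  Tendsto (fun k : ℤ => dist (hIter f k z) (x k)) atBot (nhds 0) ∧
  Tendsto (fun k : ℤ => dist (hIter f (K + k) z) (x k)) atTop (nhds 0)

section hIter

variable (f : X ≃ₜ X)

lemma hIter_add (i j : ℤ) (x : X) : hIter f (i + j) x = hIter f i (hIter f j x) := by
  simp only [hIter, zpow_add, Equiv.Perm.mul_apply]

lemma hIter_natCast (k : ℕ) (x : X) : hIter f k x = (⇑f)^[k] x := by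
  simp only [hIter, zpow_natCast, ← Equiv.Perm.iterate_eq_pow]
  rfl

lemma hIter_neg_natCast (k : ℕ) (x : X) : hIter f (-k) x = (⇑f.symm)^[k] x := by
  simp only [hIter, zpow_neg, zpow_natCast, ← inv_pow, ← Equiv.Perm.iterate_eq_pow]
  rfl

lemma periodic_of_hIter_eq {i j : ℤ} {x : X} (hij : i < j) (h : hIter f i x = hIter f j x) :
    Periodic f x := by
  obtain ⟨m, rfl⟩ := Int.lt.dest hij
  refine ⟨m + 1, m.succ_pos, ?_⟩
  rw [hIter_add] at h
  rw [← hIter_natCast]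
  exact ((f.toEquiv ^ i).injective h).symm

lemma mem_localStable_inter_localUnstable {c : ℝ} {x y : X}
    (h : ∀ k : ℤ, dist (hIter f k y) (hIter f k x) ≤ c) :
    y ∈ localStable f c x ∩ localUnstable f c x :=
  ⟨fun k => by simpa only [hIter_natCast] using h k,
    fun k => by simpa only [hIter_neg_natCast] using h (-k)⟩

end hIter

lemma Set.finite_of_forall_finset_card_le {α : Type*} {s : Set α} {n : ℕ}
    (h : ∀ S : Finset α, ↑S ⊆ s → S.card ≤ n) : s.Finite := by
  by_contra hs
  obtain ⟨S, hS, hcard⟩ := Set.Infinite.exists_subset_card_eq hs (n + 1)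
  have := h S hS
  omega

namespace ChainFrom

variable {f : X ≃ₜ X} {ε : ℝ} {x y : X}

lemma mono {ε' : ℝ} (h : ChainFrom f ε x y) (hε : ε ≤ ε') : ChainFrom f ε' x y := by
  obtain ⟨l, c, hl, hc0, hcl, hstep⟩ := h
  exact ⟨l, c, hl, hc0, hcl, fun k hk => (hstep k hk).trans_le hε⟩

lemma perturb_ends {η : ℝ} {x' y' : X} (h : ChainFrom f ε y y') (hx : dist (f x) (f y) < η)
    (hy : dist y' x' < η) : ChainFrom f (η + ε + η) x x' := by
  obtain ⟨l, c, hl, hc0, hcl, hstep⟩ := h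
  have hη : 0 < η := dist_nonneg.trans_lt hx
  set c' : ℕ → X := fun k => if k = 0 then x else if k = l then x' else c k
  refine ⟨l, c', hl, if_pos rfl, by simp [c', hl.ne'], fun k hk => ?_⟩
  have hfirst : dist (f (c' k)) (f (c k)) < η := by
    by_cases hk0 : k = 0
    · simpa [c', hk0, hc0] using hx
    · simpa [c', hk0, hk.ne] using hη
  have hlast : dist (c (k + 1)) (c' (k + 1)) < η := by
    by_cases hkl : k + 1 = l
    · simpa [c', hkl, hcl, hl.ne'] using hy
    · simpa [c', hkl] using hη
  calc dist (f (c' k)) (c' (k + 1))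
      ≤ dist (f (c' k)) (f (c k)) + dist (f (c k)) (c (k + 1)) + dist (c (k + 1)) (c' (k + 1)) :=
        dist_triangle4 _ _ _ _
    _ < η + ε + η := add_lt_add (add_lt_add hfirst (hstep k hk)) hlast

lemma exists_periodic_pseudoOrbit (h : ChainFrom f ε x x) :
    ∃ l : ℕ, 0 < l ∧ ∃ xs : ℤ → X, IsPseudoOrbit f ε xs ∧ Function.Periodic xs l ∧ xs 0 = x := by
  obtain ⟨l, c, hl, hc0, hcl, hstep⟩ := h
  have hl' : (0 : ℤ) < l := by exact_mod_cast hl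
  refine ⟨l, hl, fun k => c (k % l).toNat, fun k => ?_, fun k => by simp only [Int.add_emod_right],
    by simpa using hc0⟩
  set r := (k % l).toNat
  have hkr : k % l = r := (Int.toNat_of_nonneg (Int.emod_nonneg _ hl'.ne')).symm
  have hr : r < l := by have := Int.emod_lt_of_pos k hl'; omega
  have hnext : ((k + 1) % l).toNat = (r + 1) % l := by
    rw [← Int.emod_add_emod, hkr]
    exact_mod_cast Int.toNat_natCast _
  have hwrap : c ((r + 1) % l) = c (r + 1) := by
    rcases (show r + 1 ≤ l from hr).lt_or_eq with hlt | heq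
    · rw [Nat.mod_eq_of_lt hlt]
    · rw [heq, Nat.mod_self, hc0, hcl]
  show dist (f (c r)) (c ((k + 1) % l).toNat) < ε
  rw [hnext, hwrap]
  exact hstep r hr

end ChainFrom

lemma Periodic.chainRecurrent {f : X ≃ₜ X} {p : X} (h : Periodic f p) : ChainRecurrent f p := by
  obtain ⟨k, hk, hp⟩ := h
  exact fun ε hε => ⟨k, fun m => (⇑f)^[m] p, hk, rfl, hp,
    fun m _ => by simpa [Function.iterate_succ_apply'] using hε⟩

lemma isClosed_setOf_chainRecurrent (f : X ≃ₜ X) : IsClosed {x | ChainRecurrent f x} := by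
  refine isClosed_of_closure_subset fun x hx ε hε => ?_
  obtain ⟨η, hη, hfη⟩ :=
    Metric.continuousAt_iff.1 (f.continuous.continuousAt (x := x)) (ε / 3) (by positivity)
  obtain ⟨y, hy, hxy⟩ := Metric.mem_closure_iff.1 hx (min η (ε / 3)) (by positivity)
  have hfxy : dist (f x) (f y) < ε / 3 := by
    rw [dist_comm]
    exact hfη (by rw [dist_comm]; exact hxy.trans_le (min_le_left _ _))
  have hyx : dist y x < ε / 3 := by
    rw [dist_comm]
    exact hxy.trans_le (min_le_right _ _)
  exact ((hy (ε / 3) (by positivity)).perturb_ends hfxy hyx).mono (by linarith)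

lemma NExpansive.exists_finite_dynamicalBall {f : X ≃ₜ X} {n : ℕ} (h : NExpansive f n) :
    ∃ c > 0, ∀ x, (localStable f c x ∩ localUnstable f c x).Finite := by
  obtain ⟨c, hc, hcard⟩ := h
  exact ⟨c, hc, fun x => Set.finite_of_forall_finset_card_le (hcard x)⟩

lemma Shadows.periodic_of_periodic {f : X ≃ₜ X} {c ε : ℝ} {z : X} {xs : ℤ → X} {p : ℕ}
    (hz : Shadows f ε z xs) (hxs : Function.Periodic xs p) (hp : 0 < p)
    (hfin : ∀ x, (localStable f c x ∩ localUnstable f c x).Finite) (hε : 2 * ε ≤ c) :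
    Periodic f z := by
  have hball (j : ℕ) : hIter f (j * p) z ∈ localStable f c z ∩ localUnstable f c z := by
    refine mem_localStable_inter_localUnstable f fun k => ?_
    rw [← hIter_add]
    calc dist (hIter f (k + j * p) z) (hIter f k z)
        ≤ dist (hIter f (k + j * p) z) (xs (k + j * p)) + dist (xs k) (hIter f k z) := by
          rw [hxs.nat_mul j k]
          exact dist_triangle _ _ _
      _ ≤ ε + ε := add_le_add (hz _).le (dist_comm (xs k) _ ▸ (hz k).le)
      _ ≤ c := by linarith
  obtain ⟨a, b, hab, heq⟩ := Set.Finite.exists_lt_map_eq_of_forall_mem hball (hfin z)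
  exact periodic_of_hIter_eq f (by gcongr) heq

lemma mem_closure_periodic_of_chainRecurrent {f : X ≃ₜ X} {n : ℕ} (hexp : NExpansive f n)
    (hshad : ShadowingProperty f) {x : X} (hx : ChainRecurrent f x) :
    x ∈ closure {x | Periodic f x} := by
  obtain ⟨c, hc, hfin⟩ := hexp.exists_finite_dynamicalBall
  refine Metric.mem_closure_iff.2 fun ε hε => ?_
  obtain ⟨δ, hδ, hshadδ⟩ := hshad (min ε (c / 2)) (by positivity)
  obtain ⟨l, hl, xs, hxs, hper, hx0⟩ := (hx δ hδ).exists_periodic_pseudoOrbit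
  obtain ⟨z, hz⟩ := hshadδ xs hxs
  refine ⟨z, hz.periodic_of_periodic hper hl hfin (by linarith [min_le_right ε (c / 2)]), ?_⟩
  calc dist x z = dist (hIter f 0 z) (xs 0) := by rw [hx0, dist_comm]; rfl
    _ < min ε (c / 2) := hz 0
    _ ≤ ε := min_le_left _ _

theorem stmt5_general {X : Type*} [MetricSpace X] (f : X ≃ₜ X) (n : ℕ)
    (hexp : NExpansive f n) (hshad : ShadowingProperty f) :
    {x : X | ChainRecurrent f x} = closure {x : X | Periodic f x} :=
  Subset.antisymm (fun _ hx => mem_closure_periodic_of_chainRecurrent hexp hshad hx)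
    (closure_minimal (fun _ hp => Periodic.chainRecurrent hp) (isClosed_setOf_chainRecurrent f))

theorem stmt5 {X : Type*} [MetricSpace X] [CompactSpace X] (f : X ≃ₜ X) (n : ℕ)
    (hn : 0 < n) (hexp : NExpansive f n) (hshad : ShadowingProperty f) :
    {x : X | ChainRecurrent f x} = closure {x : X | Periodic f x} :=
  stmt5_general f n hexp hshad
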